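/- The degree-2 part of the homogeneous ideal of the rational normal curve C_d ⊂ P^d has dimension binomial(d,2) as a k-vector space, and the set Γ of the (d−1) + binomial(d−1,2) = binomial(d,2) rank-3 quadrics F_i and G_{i,j} forms a basis of it. -/

import Mathlib

/-!
The quadrics of `Γ` span the same space as the `2 × 2` minors
`N_{a,b} = z_a z_{b+1} - z_{a+1} z_b` of the Hankel matrix with rows `(z_0, …, z_{d-1})` and
`(z_1, …, z_d)`: `F_i = N_{i,i+1}` and `G_{i,j} = F_i + F_j + N_{i,j+1} - N_{i+1,j}`, and
conversely `N_{a,b}` is recovered by induction on `b - a`.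

Modulo the minors every monomial `z_m z_n` is congruent to the standard monomial
`z_{⌊e/2⌋} z_{⌈e/2⌉}` with `e = m + n`, and the standard monomials map to the distinct monomials
`s^{2d-e} t^e`. Hence a quadric vanishing on the curve lies in the span of the minors.

The minors are linearly independent: among the `N_{a',b'}` with `a' ≥ a`, only `N_{a,b}` involves
`z_a z_{b+1}`, so induction on `a` kills all coefficients. There are `binomial(d,2)` minors, as
many as elements of `Γ`, so `Γ` is a basis of their span.
-/

open MvPolynomial Finset Submodule

lemma Finsupp.exists_eq_single_add_single_of_degree_eq_two {σ : Type*} {μ : σ →₀ ℕ}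
    (h : μ.degree = 2) : ∃ a b, μ = Finsupp.single a 1 + Finsupp.single b 1 := by
  have hcard : Multiset.card (Finsupp.toMultiset μ) = 2 := by
    rw [Finsupp.card_toMultiset, ← h, Finsupp.degree_apply, Finsupp.sum]
    rfl
  classical
  obtain ⟨a, b, hab⟩ := Multiset.card_eq_two.1 hcard
  refine ⟨a, b, ?_⟩
  rw [← Finsupp.toMultiset_toFinsupp μ, hab, Multiset.insert_eq_cons, ← Multiset.singleton_add,
    Multiset.toFinsupp_add, Multiset.toFinsupp_singleton, Multiset.toFinsupp_singleton]

lemma MvPolynomial.coeff_single_add_single_X_mul_X {σ R : Type*} [CommSemiring R]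
    [DecidableEq σ] {a b : σ} (hab : a ≠ b) (m n : σ) :
    coeff (Finsupp.single a 1 + Finsupp.single b 1) (X m * X n : MvPolynomial σ R) =
      if (m = a ∧ n = b) ∨ (m = b ∧ n = a) then 1 else 0 := by
  rw [X, X, monomial_mul, one_mul, coeff_monomial]
  simp only [Finsupp.single_add_single_eq_single_add_single one_ne_zero one_ne_zero]
  simp [hab]

lemma mem_filter_lt_range_succ_iff {n : ℕ} {p : ℕ × ℕ} :
    p ∈ {p ∈ range (n + 1) ×ˢ range (n + 1) | p.1 < p.2} ↔ p.1 < p.2 ∧ p.2 ≤ n := by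
  simp only [mem_filter, mem_product, mem_range_succ_iff]
  omega

instance (n : ℕ) : Fintype {i : ℕ // i ≤ n} :=
  Fintype.subtype _ fun _ => mem_range_succ_iff

instance (n : ℕ) : Fintype {p : ℕ × ℕ // p.1 < p.2 ∧ p.2 ≤ n} :=
  Fintype.subtype _ fun _ => mem_filter_lt_range_succ_iff

lemma Fintype.card_subtype_nat_le (n : ℕ) : Fintype.card {i : ℕ // i ≤ n} = n + 1 :=
  (Fintype.card_of_subtype _ fun _ => mem_range_succ_iff).trans (Finset.card_range _)

lemma Fintype.card_subtype_nat_lt_le (n : ℕ) :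
    Fintype.card {p : ℕ × ℕ // p.1 < p.2 ∧ p.2 ≤ n} = (n + 1).choose 2 :=
  (Fintype.card_of_subtype _ fun _ => mem_filter_lt_range_succ_iff).trans
    (by rw [Finset.card_product_filter_lt, Finset.card_range])

namespace RationalNormalCurve

variable (R : Type*) [CommRing R] (d : ℕ)

/-- The coordinate `z_m`, with the junk value `0` for `m > d`. -/
noncomputable def z (m : ℕ) : MvPolynomial (Fin (d + 1)) R :=
  if h : m < d + 1 then X ⟨m, h⟩ else 0

/-- The minor on columns `a, b` of the Hankel matrix with rows `z_0, …, z_{d-1}` and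
`z_1, …, z_d`; in particular `F_i = minor i (i + 1)`. -/
noncomputable def minor (a b : ℕ) : MvPolynomial (Fin (d + 1)) R :=
  z R d a * z R d (b + 1) - z R d (a + 1) * z R d b

noncomputable def quadricG (i j : ℕ) : MvPolynomial (Fin (d + 1)) R :=
  (z R d i + z R d j) * (z R d (i + 2) + z R d (j + 2)) - (z R d (i + 1) + z R d (j + 1)) ^ 2

noncomputable def quadrics :
    {i : ℕ // i ≤ d - 2} ⊕ {p : ℕ × ℕ // p.1 < p.2 ∧ p.2 ≤ d - 2} →
      MvPolynomial (Fin (d + 1)) R :=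
  Sum.elim (fun i => minor R d i (i + 1)) fun p => quadricG R d p.1.1 p.1.2

noncomputable def minors :
    {p : ℕ × ℕ // p.1 < p.2 ∧ p.2 ≤ d - 1} → MvPolynomial (Fin (d + 1)) R :=
  fun p => minor R d p.1.1 p.1.2

noncomputable def parametrization : MvPolynomial (Fin (d + 1)) R →ₐ[R] MvPolynomial (Fin 2) R :=
  aeval fun m => X 0 ^ (d - m.1) * X 1 ^ m.1

noncomputable def quadricsOnCurve : Submodule R (MvPolynomial (Fin (d + 1)) R) :=
  homogeneousSubmodule (Fin (d + 1)) R 2 ⊓ LinearMap.ker (parametrization R d).toLinearMap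

noncomputable def standardMonomial (e : ℕ) : MvPolynomial (Fin (d + 1)) R :=
  z R d (e / 2) * z R d ((e + 1) / 2)

variable {R d}

lemma z_of_le {m : ℕ} (h : m ≤ d) : z R d m = X ⟨m, by omega⟩ := dif_pos (by omega)

lemma isHomogeneous_z (m : ℕ) : (z R d m).IsHomogeneous 1 := by
  unfold z
  split_ifs
  · exact isHomogeneous_X R _
  · exact isHomogeneous_zero _ _ _

lemma isHomogeneous_minor (a b : ℕ) : (minor R d a b).IsHomogeneous 2 :=
  ((isHomogeneous_z a).mul (isHomogeneous_z _)).sub ((isHomogeneous_z _).mul (isHomogeneous_z _))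

lemma minor_self (a : ℕ) : minor R d a a = 0 := by
  rw [minor, mul_comm, sub_self]

lemma quadricG_eq (i j : ℕ) :
    quadricG R d i j =
      minor R d i (i + 1) + minor R d j (j + 1) + minor R d i (j + 1) - minor R d (i + 1) j := by
  simp only [quadricG, minor]
  ring

lemma parametrization_z_mul_z {m n : ℕ} (hm : m ≤ d) (hn : n ≤ d) :
    parametrization R d (z R d m * z R d n) =
      X 0 ^ (2 * d - (m + n)) * X 1 ^ (m + n) := by
  rw [z_of_le hm, z_of_le hn, map_mul, parametrization, aeval_X, aeval_X, mul_mul_mul_comm,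
    ← pow_add, ← pow_add]
  congr 2
  simp only
  omega

lemma parametrization_standardMonomial {e : ℕ} (he : e ≤ 2 * d) :
    parametrization R d (standardMonomial R d e) = X 0 ^ (2 * d - e) * X 1 ^ e := by
  rw [standardMonomial, parametrization_z_mul_z (by omega) (by omega),
    show e / 2 + (e + 1) / 2 = e by omega]

lemma parametrization_minor {a b : ℕ} (hab : a < b) (hb : b < d) :
    parametrization R d (minor R d a b) = 0 := by
  rw [minor, map_sub, parametrization_z_mul_z (by omega) (by omega),
    parametrization_z_mul_z (by omega) (by omega), show a + (b + 1) = a + 1 + b by omega, sub_self]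

lemma span_minors_le_quadricsOnCurve : span R (Set.range (minors R d)) ≤ quadricsOnCurve R d := by
  rw [span_le]
  rintro _ ⟨⟨⟨a, b⟩, hab, hb : b ≤ d - 1⟩, rfl⟩
  exact ⟨isHomogeneous_minor a b, parametrization_minor (b := b) hab (by omega)⟩

lemma minor_mem_span_minors {a b : ℕ} (hab : a ≤ b) (hb : b < d) :
    minor R d a b ∈ span R (Set.range (minors R d)) := by
  rcases hab.lt_or_eq with hab | rfl
  · exact subset_span ⟨⟨(a, b), hab, by omega⟩, rfl⟩
  · rw [minor_self]
    exact zero_mem _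

lemma z_mul_z_sub_standardMonomial_mem {m n : ℕ} (hmn : m ≤ n) (hn : n ≤ d) :
    z R d m * z R d n - standardMonomial R d (m + n) ∈ span R (Set.range (minors R d)) := by
  induction n using Nat.strong_induction_on generalizing m with
  | _ n ih =>
  rcases (by omega : n ≤ m + 1 ∨ m + 2 ≤ n) with hclose | hfar
  · rw [standardMonomial, show (m + n) / 2 = m by omega, show (m + n + 1) / 2 = n by omega,
      sub_self]
    exact zero_mem _
  · have hstep : z R d m * z R d n - standardMonomial R d (m + n) =
        minor R d m (n - 1) +
          (z R d (m + 1) * z R d (n - 1) - standardMonomial R d (m + 1 + (n - 1))) := by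
      rw [minor, show n - 1 + 1 = n by omega, show m + 1 + (n - 1) = m + n by omega]
      ring
    rw [hstep]
    exact add_mem (minor_mem_span_minors (by omega) (by omega))
      (ih (n - 1) (by omega) (by omega) (by omega))

lemma homogeneousSubmodule_two_le :
    homogeneousSubmodule (Fin (d + 1)) R 2 ≤
      span R (Set.range (minors R d)) ⊔
        span R (Set.range fun e : Fin (2 * d + 1) => standardMonomial R d e) := by
  rw [homogeneousSubmodule_eq_finsupp_supported, ← restrictSupport, restrictSupport_eq_span,
    span_le]
  rintro _ ⟨μ, hμ, rfl⟩
  obtain ⟨a, b, rfl⟩ := Finsupp.exists_eq_single_add_single_of_degree_eq_two hμ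
  clear hμ
  wlog hab : a ≤ b generalizing a b
  · rw [add_comm (Finsupp.single a 1)]
    exact this b a (le_of_not_ge hab)
  have hmono : (monomial (Finsupp.single a 1 + Finsupp.single b 1) 1 :
      MvPolynomial (Fin (d + 1)) R) = z R d a * z R d b := by
    rw [z_of_le a.is_le, z_of_le b.is_le, X, X, monomial_mul, one_mul]
  simp only [SetLike.mem_coe, hmono]
  rw [← sub_add_cancel (z R d a * z R d b) (standardMonomial R d (a + b))]
  refine add_mem (mem_sup_left (z_mul_z_sub_standardMonomial_mem hab b.is_le))
    (mem_sup_right (subset_span ⟨⟨a + b, by omega⟩, rfl⟩))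

lemma disjoint_span_standardMonomial_ker :
    Disjoint (span R (Set.range fun e : Fin (2 * d + 1) => standardMonomial R d e))
      (LinearMap.ker (parametrization R d).toLinearMap) := by
  apply range_ker_disjoint
  have himage :
      (parametrization R d).toLinearMap ∘ (fun e : Fin (2 * d + 1) => standardMonomial R d e) =
        basisMonomials (Fin 2) R ∘
          fun e : Fin (2 * d + 1) => Finsupp.single 0 (2 * d - e) + Finsupp.single 1 (e : ℕ) := by
    ext1 e
    rw [Function.comp_apply, AlgHom.toLinearMap_apply, parametrization_standardMonomial (by omega),
      Function.comp_apply, coe_basisMonomials, X_pow_eq_monomial, X_pow_eq_monomial,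
      monomial_mul, one_mul]
  rw [himage]
  refine (basisMonomials (Fin 2) R).linearIndependent.comp _ fun e f hef => Fin.ext ?_
  simpa using congrArg (· 1) hef

theorem quadricsOnCurve_eq_span_minors :
    quadricsOnCurve R d = span R (Set.range (minors R d)) := by
  refine le_antisymm ?_ span_minors_le_quadricsOnCurve
  calc quadricsOnCurve R d
      ≤ (span R (Set.range (minors R d)) ⊔
          span R (Set.range fun e : Fin (2 * d + 1) => standardMonomial R d e)) ⊓
        LinearMap.ker (parametrization R d).toLinearMap :=
        inf_le_inf_right _ homogeneousSubmodule_two_le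
    _ = span R (Set.range (minors R d)) := by
      rw [sup_inf_assoc_of_le _ (span_minors_le_quadricsOnCurve.trans inf_le_right),
        disjoint_span_standardMonomial_ker.eq_bot, sup_bot_eq]

lemma coeff_minor {a b p q : ℕ} (hab : a < b) (hb : b < d) (hpq : p < q) (hq : q < d)
    (hap : a ≤ p) :
    coeff (Finsupp.single ⟨a, by omega⟩ 1 + Finsupp.single ⟨b + 1, by omega⟩ 1)
        (minor R d p q) = if p = a ∧ q = b then 1 else 0 := by
  rw [minor, coeff_sub, z_of_le (m := p) (by omega), z_of_le (m := q + 1) (by omega),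
    z_of_le (m := p + 1) (by omega), z_of_le (m := q) (by omega),
    coeff_single_add_single_X_mul_X (by simp; omega),
    coeff_single_add_single_X_mul_X (by simp; omega)]
  simp only [Fin.mk.injEq]
  split_ifs <;> first | omega | simp

theorem linearIndependent_minors : LinearIndependent R (minors R d) := by
  classical
  rw [Fintype.linearIndependent_iff]
  intro g hg i
  induction ha : i.1.1 using Nat.strong_induction_on generalizing i with
  | _ n ih =>
  obtain ⟨⟨a, b⟩, hab : a < b, hb : b ≤ d - 1⟩ := i
  obtain rfl : a = n := ha
  have hcoeff := congrArg
    (coeff (Finsupp.single ⟨a, by omega⟩ 1 + Finsupp.single ⟨b + 1, by omega⟩ 1)) hg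
  rw [coeff_sum, Finset.sum_eq_single ⟨(a, b), hab, hb⟩] at hcoeff
  · simpa [minors, coeff_minor (R := R) (d := d) hab (by omega) hab (by omega) le_rfl] using hcoeff
  · rintro ⟨⟨p, q⟩, hpq : p < q, hq : q ≤ d - 1⟩ - hne
    rw [coeff_smul]
    rcases lt_or_ge p a with hlt | hge
    · rw [ih p hlt _ rfl, zero_smul]
    · rw [minors, coeff_minor hab (by omega) hpq (by omega) hge, if_neg, smul_zero]
      rintro ⟨rfl, rfl⟩
      exact hne rfl
  · simp

lemma minor_mem_span_quadrics (hd : 2 ≤ d) {a b : ℕ} (hab : a < b) (hb : b < d) :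
    minor R d a b ∈ span R (Set.range (quadrics R d)) := by
  induction b using Nat.strong_induction_on generalizing a with
  | _ b ih =>
  have hF : ∀ i, i + 1 < d → minor R d i (i + 1) ∈ span R (Set.range (quadrics R d)) :=
    fun i hi => subset_span ⟨Sum.inl ⟨i, by omega⟩, rfl⟩
  rcases (by omega : b = a + 1 ∨ a + 2 ≤ b) with rfl | hfar
  · exact hF a hb
  have hG : quadricG R d a (b - 1) ∈ span R (Set.range (quadrics R d)) :=
    subset_span ⟨Sum.inr ⟨(a, b - 1), by omega, by omega⟩, rfl⟩
  have hinner : minor R d (a + 1) (b - 1) ∈ span R (Set.range (quadrics R d)) := by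
    rcases (by omega : a + 1 < b - 1 ∨ a + 1 = b - 1) with hlt | heq
    · exact ih (b - 1) (by omega) hlt (by omega)
    · rw [heq, minor_self]
      exact zero_mem _
  have hstep : minor R d a b =
      quadricG R d a (b - 1) - minor R d a (a + 1) - minor R d (b - 1) (b - 1 + 1) +
        minor R d (a + 1) (b - 1) := by
    rw [quadricG_eq, show b - 1 + 1 = b by omega]
    abel
  rw [hstep]
  exact add_mem (sub_mem (sub_mem hG (hF a (by omega))) (hF (b - 1) (by omega))) hinner

theorem span_quadrics_eq_span_minors (hd : 2 ≤ d) :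
    span R (Set.range (quadrics R d)) = span R (Set.range (minors R d)) := by
  apply le_antisymm
  · rw [span_le]
    rintro _ ⟨i | ⟨⟨i, j⟩, hij, hj⟩, rfl⟩
    · exact minor_mem_span_minors (by omega) (by have := i.2; omega)
    · simp only [quadrics, Sum.elim_inr, quadricG_eq]
      refine sub_mem (add_mem (add_mem ?_ ?_) ?_) ?_ <;>
        exact minor_mem_span_minors (by omega) (by omega)
  · rw [span_le]
    rintro _ ⟨⟨⟨a, b⟩, hab, hb : b ≤ d - 1⟩, rfl⟩
    exact minor_mem_span_quadrics (b := b) hd hab (by omega)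

end RationalNormalCurve

open RationalNormalCurve in
/-- The degree-2 part of the homogeneous ideal of the rational normal curve `C_d ⊂ P^d` has
dimension `binomial(d,2)`, and the family `Γ` of the `(d−1) + binomial(d−1,2) = binomial(d,2)`
rank-3 quadrics `F_i = z_i z_{i+2} − z_{i+1}²` and
`G_{i,j} = (z_i+z_j)(z_{i+2}+z_{j+2}) − (z_{i+1}+z_{j+1})²` is a basis of it:
`Γ` is linearly independent and its span is exactly the space of quadratic forms vanishing on
the curve (i.e. mapped to `0` under `z_m ↦ s^{d−m} t^m`). -/
theorem stmt_10 {k : Type*} [Field k] (d : ℕ) (hd : 3 ≤ d)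
    (Γ : ({i : ℕ // i ≤ d - 2} ⊕ {p : ℕ × ℕ // p.1 < p.2 ∧ p.2 ≤ d - 2}) →
      MvPolynomial (Fin (d + 1)) k)
    (hΓ : Γ = Sum.elim
      (fun i : {i : ℕ // i ≤ d - 2} =>
        X ⟨i.1, by have := i.2; omega⟩ * X ⟨i.1 + 2, by have := i.2; omega⟩ -
          X ⟨i.1 + 1, by have := i.2; omega⟩ ^ 2)
      (fun p : {p : ℕ × ℕ // p.1 < p.2 ∧ p.2 ≤ d - 2} =>
        (X ⟨p.1.1, by have := p.2; omega⟩ + X ⟨p.1.2, by have := p.2; omega⟩) *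
            (X ⟨p.1.1 + 2, by have := p.2; omega⟩ + X ⟨p.1.2 + 2, by have := p.2; omega⟩) -
          (X ⟨p.1.1 + 1, by have := p.2; omega⟩ + X ⟨p.1.2 + 1, by have := p.2; omega⟩) ^ 2)) :
    LinearIndependent k Γ ∧
    (∀ q : MvPolynomial (Fin (d + 1)) k,
      (q.IsHomogeneous 2 ∧
        aeval (fun m : Fin (d + 1) => (X 0 : MvPolynomial (Fin 2) k) ^ (d - m.1) * X 1 ^ m.1)
          q = 0) ↔ q ∈ Submodule.span k (Set.range Γ)) ∧
    (d - 1) + Nat.choose (d - 1) 2 = Nat.choose d 2 ∧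
    Module.finrank k ↥(Submodule.span k (Set.range Γ)) = Nat.choose d 2 := by
  obtain rfl : Γ = quadrics k d := by
    subst hΓ
    ext1 (⟨i, hi⟩ | ⟨⟨i, j⟩, hij, hj⟩) <;>
      simp (disch := omega) [quadrics, minor, quadricG, z_of_le, sq]
  have hspan := span_quadrics_eq_span_minors (R := k) (d := d) (by omega)
  have hpascal : (d - 1) + (d - 1).choose 2 = d.choose 2 := by
    obtain ⟨e, rfl⟩ : ∃ e, d = e + 1 := ⟨d - 1, by omega⟩
    simp [Nat.choose_succ_succ]
  have hrank : Module.finrank k (span k (Set.range (quadrics k d))) = d.choose 2 := by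
    rw [hspan, finrank_span_eq_card linearIndependent_minors, Fintype.card_subtype_nat_lt_le,
      Nat.sub_add_cancel (by omega)]
  refine ⟨?_, fun q => ?_, hpascal, hrank⟩
  · rw [linearIndependent_iff_card_eq_finrank_span, Set.finrank, hrank, Fintype.card_sum,
      Fintype.card_subtype_nat_le, Fintype.card_subtype_nat_lt_le, show d - 2 + 1 = d - 1 by omega,
      hpascal]
  · rw [hspan, ← quadricsOnCurve_eq_span_minors]
    rfl
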